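/- arXiv:1808.09107 — 4 statements merged into one kernel-verified Lean document; each statement's English description precedes it below -/
import Mathlib

section
/- Let H = diag(H₁₁,…,H_qq) with H₁₁ ≥ H₂₂ ≥ ⋯ ≥ H_qq > 0 and let U = (U₁,…,U_q) be uniform on the unit sphere in ℝ^q. Define M_jj = E[H_jj U_j² / (Σ_k H_kk U_k²)]. Then M_jj ≥ M_{j+1,j+1} for all j = 1,…,q-1. -/
/-!
Fix `i < j`, so `H j ≤ H i`, and let `V` be `U` with coordinates `i` and `j` swapped. Writing
`a = U_i²`, `b = U_j²`, `R` for the rest of `∑ H_k U_k²`, `S = R + H_i a + H_j b` and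
`S' = R + H_i b + H_j a` (the same sum for `V`), one has pointwise
`H_i a / S + H_i b / S' - H_j b / S - H_j a / S' ≥ 0`, since clearing denominators leaves
`R (H_i - H_j)(a + b) + 2 a b (H_i² - H_j²)`. The swap is orthogonal, so `V` has the law of `U`;
taking expectations gives `2 M_ii - 2 M_jj ≥ 0`.
-/

open MeasureTheory ProbabilityTheory

lemma Equiv.Perm.permMatrix_mem_orthogonalGroup {n : Type*} [Fintype n] [DecidableEq n]
    (σ : Equiv.Perm n) : σ.permMatrix ℝ ∈ Matrix.orthogonalGroup n ℝ := by
  rw [Matrix.mem_orthogonalGroup_iff', Matrix.transpose_permMatrix, ← Matrix.permMatrix_mul,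
    mul_inv_cancel, Matrix.permMatrix_one]

lemma div_add_div_le_of_swap {A B a b R : ℝ} (hB : 0 < B) (hBA : B ≤ A) (ha : 0 ≤ a)
    (hb : 0 ≤ b) (hR : 0 ≤ R) :
    B * b / (R + A * a + B * b) + B * a / (R + A * b + B * a)
      ≤ A * a / (R + A * a + B * b) + A * b / (R + A * b + B * a) := by
  rcases (add_nonneg ha hb).eq_or_lt with hab | hab
  · obtain ⟨rfl, rfl⟩ : a = 0 ∧ b = 0 := by constructor <;> linarith
    simp
  have hS : 0 < R + A * a + B * b := by nlinarith
  have hS' : 0 < R + A * b + B * a := by nlinarith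
  rw [div_add_div _ _ hS.ne' hS'.ne', div_add_div _ _ hS.ne' hS'.ne',
    div_le_div_iff_of_pos_right (by positivity), ← sub_nonneg]
  have key : A * a * (R + A * b + B * a) + (R + A * a + B * b) * (A * b)
      - (B * b * (R + A * b + B * a) + (R + A * a + B * b) * (B * a))
      = R * (A - B) * (a + b) + 2 * a * b * ((A - B) * (A + B)) := by
    ring
  have hAB : 0 ≤ A - B := sub_nonneg.2 hBA
  rw [key]
  exact add_nonneg (mul_nonneg (mul_nonneg hR hAB) (add_nonneg ha hb))
    (mul_nonneg (by positivity) (mul_nonneg hAB (by linarith)))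

section WeightedShare

variable {ι : Type*} [Fintype ι] (H : ι → ℝ)

/-- `M_mm = E[weightedShare H U m]`; at `u = 0` the value is the junk `0 / 0 = 0`. -/
noncomputable def weightedShare (u : ι → ℝ) (m : ι) : ℝ :=
  H m * u m ^ 2 / ∑ k, H k * u k ^ 2

variable {H}

lemma measurable_weightedShare (m : ι) : Measurable fun u : ι → ℝ => weightedShare H u m := by
  unfold weightedShare
  fun_prop

lemma weightedShare_nonneg (hH : ∀ k, 0 ≤ H k) (u : ι → ℝ) (m : ι) : 0 ≤ weightedShare H u m :=
  div_nonneg (mul_nonneg (hH m) (sq_nonneg _))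
    (Finset.sum_nonneg fun k _ => mul_nonneg (hH k) (sq_nonneg _))

lemma weightedShare_le_one (hH : ∀ k, 0 ≤ H k) (u : ι → ℝ) (m : ι) : weightedShare H u m ≤ 1 :=
  div_le_one_of_le₀
    (Finset.single_le_sum (f := fun k => H k * u k ^ 2)
      (fun k _ => mul_nonneg (hH k) (sq_nonneg _)) (Finset.mem_univ m))
    (Finset.sum_nonneg fun k _ => mul_nonneg (hH k) (sq_nonneg _))

lemma integrable_weightedShare {Ω : Type*} [MeasurableSpace Ω] {μ : Measure Ω}
    [IsFiniteMeasure μ] (hH : ∀ k, 0 ≤ H k) {U : Ω → ι → ℝ} (hU : AEMeasurable U μ) (m : ι) :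
    Integrable (fun ω => weightedShare H (U ω) m) μ := by
  refine Integrable.of_bound
    ((measurable_weightedShare m).comp_aemeasurable hU).aestronglyMeasurable 1 ?_
  refine Filter.Eventually.of_forall fun ω => ?_
  rw [Real.norm_of_nonneg (weightedShare_nonneg hH _ _)]
  exact weightedShare_le_one hH _ _

variable [DecidableEq ι]

lemma sum_mul_sq_eq_add_add_sum_compl {i j : ι} (hij : i ≠ j) (u : ι → ℝ) :
    ∑ k, H k * u k ^ 2
      = ∑ k ∈ {i, j}ᶜ, H k * u k ^ 2 + H i * u i ^ 2 + H j * u j ^ 2 := by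
  rw [← Finset.sum_add_sum_compl {i, j}, Finset.sum_pair hij]
  ring

lemma sum_mul_sq_comp_swap {i j : ι} (hij : i ≠ j) (u : ι → ℝ) :
    ∑ k, H k * (u ∘ Equiv.swap i j) k ^ 2
      = ∑ k ∈ {i, j}ᶜ, H k * u k ^ 2 + H i * u j ^ 2 + H j * u i ^ 2 := by
  rw [sum_mul_sq_eq_add_add_sum_compl hij]
  refine congrArg₂ _ (congrArg₂ _ (Finset.sum_congr rfl fun k hk => ?_) ?_) ?_
  · simp only [Finset.mem_compl, Finset.mem_insert, Finset.mem_singleton, not_or] at hk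
    simp [Equiv.swap_apply_of_ne_of_ne hk.1 hk.2]
  · simp
  · simp

lemma weightedShare_add_weightedShare_swap_le (hH : ∀ k, 0 ≤ H k) {i j : ι} (hj : 0 < H j)
    (hji : H j ≤ H i) (u : ι → ℝ) :
    weightedShare H u j + weightedShare H (u ∘ Equiv.swap i j) j
      ≤ weightedShare H u i + weightedShare H (u ∘ Equiv.swap i j) i := by
  rcases eq_or_ne i j with rfl | hij
  · rfl
  have hR : 0 ≤ ∑ k ∈ {i, j}ᶜ, H k * u k ^ 2 :=
    Finset.sum_nonneg fun k _ => mul_nonneg (hH k) (sq_nonneg _)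
  have key := div_add_div_le_of_swap hj hji (sq_nonneg (u i)) (sq_nonneg (u j)) hR
  unfold weightedShare
  rw [sum_mul_sq_eq_add_add_sum_compl hij, sum_mul_sq_comp_swap hij]
  simpa [add_comm] using key

end WeightedShare

lemma integral_weightedShare_le_of_identDistrib_swap {ι Ω : Type*} [Fintype ι] [DecidableEq ι]
    [MeasurableSpace Ω] {μ : Measure Ω} [IsFiniteMeasure μ] {U : Ω → ι → ℝ} {H : ι → ℝ}
    {i j : ι} (hU : IdentDistrib (fun ω => U ω ∘ Equiv.swap i j) U μ μ)
    (hH : ∀ k, 0 ≤ H k) (hj : 0 < H j) (hji : H j ≤ H i) :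
    ∫ ω, weightedShare H (U ω) j ∂μ ≤ ∫ ω, weightedShare H (U ω) i ∂μ := by
  have hintU := integrable_weightedShare hH hU.aemeasurable_snd
  have hintV := integrable_weightedShare hH hU.aemeasurable_fst
  have hswap (m : ι) :
      ∫ ω, weightedShare H (U ω ∘ Equiv.swap i j) m ∂μ = ∫ ω, weightedShare H (U ω) m ∂μ :=
    (hU.comp (measurable_weightedShare m)).integral_eq
  have hsum : ∫ ω, (weightedShare H (U ω) j + weightedShare H (U ω ∘ Equiv.swap i j) j) ∂μ
      ≤ ∫ ω, (weightedShare H (U ω) i + weightedShare H (U ω ∘ Equiv.swap i j) i) ∂μ :=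
    integral_mono ((hintU j).add (hintV j)) ((hintU i).add (hintV i))
      fun ω => weightedShare_add_weightedShare_swap_le hH hj hji (U ω)
  rw [integral_add (hintU j) (hintV j), integral_add (hintU i) (hintV i), hswap, hswap] at hsum
  linarith

theorem kendall_eigs_antitone_general
    {Ω : Type*} [MeasurableSpace Ω] (μ : Measure Ω) [IsProbabilityMeasure μ]
    {q : ℕ} (U : Ω → Fin q → ℝ)
    (hUunif : ∀ O : Matrix.orthogonalGroup (Fin q) ℝ,
      ProbabilityTheory.IdentDistrib (fun ω => (O : Matrix (Fin q) (Fin q) ℝ).mulVec (U ω)) U μ μ)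
    (H : Fin q → ℝ) (hHpos : ∀ k, 0 < H k) (hH : Antitone H) :
    Antitone (fun j : Fin q =>
      ∫ ω, (H j * U ω j ^ 2) / (∑ k, H k * U ω k ^ 2) ∂μ) := by
  intro i j hij
  have hswap := hUunif ⟨_, (Equiv.swap i j).permMatrix_mem_orthogonalGroup⟩
  simp only [Matrix.permMatrix_mulVec] at hswap
  exact integral_weightedShare_le_of_identDistrib_swap hswap (fun k => (hHpos k).le) (hHpos j)
    (hH hij)

theorem kendall_eigs_antitone
    {Ω : Type*} [MeasurableSpace Ω] (μ : Measure Ω) [IsProbabilityMeasure μ]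
    {q : ℕ} (U : Ω → Fin q → ℝ) (hUmeas : Measurable U)
    -- `U` is uniform on the unit sphere of ℝ^q :
    (hUsphere : ∀ᵐ ω ∂μ, ∑ k, U ω k ^ 2 = 1)
    (hUunif : ∀ O : Matrix.orthogonalGroup (Fin q) ℝ,
      ProbabilityTheory.IdentDistrib (fun ω => (O : Matrix (Fin q) (Fin q) ℝ).mulVec (U ω)) U μ μ)
    (H : Fin q → ℝ) (hHpos : ∀ k, 0 < H k) (hH : Antitone H) :
    Antitone (fun j : Fin q =>
      ∫ ω, (H j * U ω j ^ 2) / (∑ k, H k * U ω k ^ 2) ∂μ) :=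
  kendall_eigs_antitone_general μ U hUunif H hHpos hH
end

section
/- Let Σ_y = ΛΛᵀ + Σ_u where Λ is N × r with ‖ΛᵀΛ/N − Σ_Λ‖₂ → 0 for a positive definite Σ_Λ with eigenvalues in [C₂, C₁], and Σ_u is N × N symmetric with eigenvalues in [C₂, C₁]. Then for j ≤ r, N(C₂' + o(1)) ≤ λ_j(Σ_y) ≤ N(C₁' + o(1)) for constants depending on C₁, C₂, while for j > r, λ_j(Σ_y) ≤ C₁. -/
/-!
Everything is compared through quadratic forms. Writing `ΛᵀΛ = N (Σ_Λ + E_N)` with `‖E_N‖ → 0`,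
the quadratic form of `ΛᵀΛ` lies between `N (C₂ - ‖E_N‖)` and `N (C₁ + ‖E_N‖)` times the squared
norm, and Cauchy–Schwarz transfers these bounds to `ΛΛᵀ`: from above everywhere, from below on the
range of `Λ`. The Courant–Fischer min-max principle turns quadratic-form bounds on a subspace into
eigenvalue bounds; it is applied on the `r`-dimensional range of `Λ` for the lower bound, on the
whole space for the upper bound, and, for `j ≥ r`, on the kernel of `Λᵀ`, which has codimension at
most `r` and on which `Σ_y` acts as `Σ_u`.
-/

open Matrix Filter
open scoped Matrix.Norms.L2Operator

/-- The `j`-th largest entry of `v` (0-indexed). -/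
noncomputable def nthLargest {N : ℕ} (v : Fin N → ℝ) (j : Fin N) : ℝ :=
  ((List.ofFn v).mergeSort (fun a b => b ≤ a)).getD j 0

open Finset

theorem exists_perm_antitone_nthLargest_eq {n : ℕ} (v : Fin n → ℝ) :
    ∃ σ : Equiv.Perm (Fin n), Antitone (v ∘ σ) ∧ nthLargest v = v ∘ σ := by
  let σ : Equiv.Perm (Fin n) := Fin.revPerm.trans (Tuple.sort v)
  have hσ : Antitone (v ∘ σ) := fun i j hij => Tuple.monotone_sort v (Fin.rev_le_rev.mpr hij)
  have hsort : (List.ofFn v).mergeSort (fun a b => b ≤ a) = List.ofFn (v ∘ σ) :=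
    ((List.mergeSort_perm _ _).trans (Equiv.Perm.ofFn_comp_perm σ v).symm).eq_of_sortedGE
      List.sortedGE_mergeSort hσ.sortedGE_ofFn
  refine ⟨σ, hσ, funext fun j => ?_⟩
  simp [nthLargest, hsort]

theorem succ_le_card_nthLargest_le {n : ℕ} (v : Fin n → ℝ) (j : Fin n) :
    (j : ℕ) + 1 ≤ #{i | nthLargest v j ≤ v i} := by
  obtain ⟨σ, hσ, hv⟩ := exists_perm_antitone_nthLargest_eq v
  calc (j : ℕ) + 1 = #((Iic j).map σ.toEmbedding) := by simp
    _ ≤ #{i | nthLargest v j ≤ v i} := card_le_card fun i hi => by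
      obtain ⟨k, hk, rfl⟩ := mem_map.mp hi
      simpa [hv] using hσ (mem_Iic.mp hk)

theorem le_card_le_nthLargest_add {n : ℕ} (v : Fin n → ℝ) (j : Fin n) :
    n ≤ #{i | v i ≤ nthLargest v j} + j := by
  obtain ⟨σ, hσ, hv⟩ := exists_perm_antitone_nthLargest_eq v
  have : n - j ≤ #{i | v i ≤ nthLargest v j} :=
    calc n - (j : ℕ) = #((Ici j).map σ.toEmbedding) := by simp
      _ ≤ #{i | v i ≤ nthLargest v j} := card_le_card fun i hi => by
        obtain ⟨k, hk, rfl⟩ := mem_map.mp hi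
        simpa [hv] using hσ (mem_Ici.mp hk)
  omega

theorem dotProduct_sq_le {ι : Type*} [Fintype ι] (a b : ι → ℝ) :
    (a ⬝ᵥ b) ^ 2 ≤ (a ⬝ᵥ a) * (b ⬝ᵥ b) := by
  simpa [dotProduct, sq] using sum_mul_sq_le_sq_mul_sq univ a b

theorem dotProduct_self_nonneg {ι : Type*} [Fintype ι] (a : ι → ℝ) : 0 ≤ a ⬝ᵥ a := by
  simpa using dotProduct_star_self_nonneg a

section WeightedSum

variable {ι : Type*} [Fintype ι] {s : Set ι} {w y : ι → ℝ} {c : ℝ}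

theorem dotProduct_mul_le_of_mem_spanSubset (hw : ∀ i ∈ s, w i ≤ c)
    (hy : y ∈ Pi.spanSubset ℝ s) : y ⬝ᵥ (w * y) ≤ c * (y ⬝ᵥ y) := by
  rw [Pi.mem_spanSubset_iff] at hy
  simp only [dotProduct, mul_sum, Pi.mul_apply]
  refine sum_le_sum fun i _ => ?_
  by_cases hi : i ∈ s
  · nlinarith [hw i hi, mul_self_nonneg (y i)]
  · simp [hy i hi]

theorem le_dotProduct_mul_of_mem_spanSubset (hw : ∀ i ∈ s, c ≤ w i)
    (hy : y ∈ Pi.spanSubset ℝ s) : c * (y ⬝ᵥ y) ≤ y ⬝ᵥ (w * y) := by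
  rw [Pi.mem_spanSubset_iff] at hy
  simp only [dotProduct, mul_sum, Pi.mul_apply]
  refine sum_le_sum fun i _ => ?_
  by_cases hi : i ∈ s
  · nlinarith [hw i hi, mul_self_nonneg (y i)]
  · simp [hy i hi]

end WeightedSum

theorem Submodule.exists_mem_inf_ne_zero_of_finrank_lt {K E : Type*} [DivisionRing K]
    [AddCommGroup E] [Module K E] [FiniteDimensional K E] {V W : Submodule K E}
    (h : Module.finrank K E < Module.finrank K V + Module.finrank K W) :
    ∃ x ∈ V ⊓ W, x ≠ 0 := by
  by_contra! hVW
  refine (Submodule.finrank_add_finrank_le_of_disjoint ?_).not_gt h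
  rw [Submodule.disjoint_def]
  exact fun x hxV hxW => hVW x ⟨hxV, hxW⟩

theorem abs_dotProduct_mulVec_le_l2_opNorm {ι : Type*} [Fintype ι] [DecidableEq ι]
    (E : Matrix ι ι ℝ) (z : ι → ℝ) :
    |z ⬝ᵥ (E *ᵥ z)| ≤ ‖E‖ * (z ⬝ᵥ z) := by
  let e := (EuclideanSpace.equiv ι ℝ).symm
  have hinner : ∀ a b : ι → ℝ, a ⬝ᵥ b = inner ℝ (e a) (e b) := fun a b => by
    simp [e, EuclideanSpace.inner_eq_star_dotProduct, dotProduct_comm]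
  have hz : z ⬝ᵥ z = ‖e z‖ ^ 2 := by rw [hinner, real_inner_self_eq_norm_sq]
  calc |z ⬝ᵥ (E *ᵥ z)| ≤ ‖e z‖ * ‖e (E *ᵥ z)‖ := by
        rw [hinner]; exact abs_real_inner_le_norm _ _
    _ ≤ ‖e z‖ * (‖E‖ * ‖e z‖) := by gcongr; exact l2_opNorm_mulVec E (e z)
    _ = ‖E‖ * (z ⬝ᵥ z) := by rw [hz]; ring

namespace Matrix.IsHermitian

variable {n : Type*} [Fintype n] [DecidableEq n] {A : Matrix n n ℝ} (hA : A.IsHermitian)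

theorem mulVec_eigenvectorUnitary_mulVec (y : n → ℝ) :
    A *ᵥ (hA.eigenvectorUnitary *ᵥ y) = hA.eigenvectorUnitary *ᵥ (hA.eigenvalues * y) := by
  conv_lhs => arg 1; rw [hA.spectral_theorem]
  simp only [Unitary.conjStarAlgAut_apply, mulVec_mulVec, Matrix.mul_assoc,
    Unitary.coe_star_mul_self, Matrix.mul_one]
  rw [← mulVec_mulVec]
  congr 1
  ext i
  simp [mulVec_diagonal]

theorem eigenvectorUnitary_mulVec_dotProduct (y w : n → ℝ) :
    (hA.eigenvectorUnitary *ᵥ y) ⬝ᵥ ((hA.eigenvectorUnitary : Matrix n n ℝ) *ᵥ w) = y ⬝ᵥ w := by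
  rw [dotProduct_mulVec, vecMul_mulVec, ← conjTranspose_eq_transpose_of_trivial,
    ← star_eq_conjTranspose, Unitary.coe_star_mul_self, vecMul_one]

noncomputable def eigenvectorSpan (s : Finset n) : Submodule ℝ (n → ℝ) :=
  (Pi.spanSubset ℝ (s : Set n)).map (mulVecLin hA.eigenvectorUnitary)

theorem finrank_eigenvectorSpan (s : Finset n) :
    Module.finrank ℝ (hA.eigenvectorSpan s) = #s := by
  have hinj : Function.Injective (mulVecLin (hA.eigenvectorUnitary : Matrix n n ℝ)) :=
    fun y w hyw => by
      simpa [mulVec_mulVec] using congrArg (star (hA.eigenvectorUnitary : Matrix n n ℝ) *ᵥ ·) hyw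
  rw [eigenvectorSpan, ← LinearEquiv.finrank_eq (Submodule.equivMapOfInjective _ hinj _),
    Pi.dim_spanSubset, Set.ncard_coe_finset]

theorem mem_eigenvectorSpan_univ (x : n → ℝ) : x ∈ hA.eigenvectorSpan univ :=
  ⟨star (hA.eigenvectorUnitary : Matrix n n ℝ) *ᵥ x, by simp [Pi.mem_spanSubset_iff],
    by simp [mulVec_mulVec]⟩

theorem dotProduct_mulVec_le_of_mem_eigenvectorSpan {s : Finset n} {c : ℝ}
    (h : ∀ i ∈ s, hA.eigenvalues i ≤ c) {x : n → ℝ} (hx : x ∈ hA.eigenvectorSpan s) :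
    x ⬝ᵥ (A *ᵥ x) ≤ c * (x ⬝ᵥ x) := by
  obtain ⟨y, hy, rfl⟩ := hx
  rw [mulVecLin_apply, mulVec_eigenvectorUnitary_mulVec, eigenvectorUnitary_mulVec_dotProduct,
    eigenvectorUnitary_mulVec_dotProduct]
  exact dotProduct_mul_le_of_mem_spanSubset h hy

theorem le_dotProduct_mulVec_of_mem_eigenvectorSpan {s : Finset n} {c : ℝ}
    (h : ∀ i ∈ s, c ≤ hA.eigenvalues i) {x : n → ℝ} (hx : x ∈ hA.eigenvectorSpan s) :
    c * (x ⬝ᵥ x) ≤ x ⬝ᵥ (A *ᵥ x) := by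
  obtain ⟨y, hy, rfl⟩ := hx
  rw [mulVecLin_apply, mulVec_eigenvectorUnitary_mulVec, eigenvectorUnitary_mulVec_dotProduct,
    eigenvectorUnitary_mulVec_dotProduct]
  exact le_dotProduct_mul_of_mem_spanSubset h hy

theorem dotProduct_mulVec_le_of_eigenvalues_le {c : ℝ} (h : ∀ i, hA.eigenvalues i ≤ c)
    (x : n → ℝ) : x ⬝ᵥ (A *ᵥ x) ≤ c * (x ⬝ᵥ x) :=
  hA.dotProduct_mulVec_le_of_mem_eigenvectorSpan (fun i _ => h i) (hA.mem_eigenvectorSpan_univ x)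

theorem le_dotProduct_mulVec_of_le_eigenvalues {c : ℝ} (h : ∀ i, c ≤ hA.eigenvalues i)
    (x : n → ℝ) : c * (x ⬝ᵥ x) ≤ x ⬝ᵥ (A *ᵥ x) :=
  hA.le_dotProduct_mulVec_of_mem_eigenvectorSpan (fun i _ => h i) (hA.mem_eigenvectorSpan_univ x)

theorem dotProduct_add_mulVec_le {b : ℝ} (h : ∀ i, hA.eigenvalues i ≤ b) (E : Matrix n n ℝ)
    (z : n → ℝ) : z ⬝ᵥ ((A + E) *ᵥ z) ≤ (b + ‖E‖) * (z ⬝ᵥ z) := by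
  rw [add_mulVec, dotProduct_add, add_mul]
  exact add_le_add (hA.dotProduct_mulVec_le_of_eigenvalues_le h z)
    (abs_le.mp (abs_dotProduct_mulVec_le_l2_opNorm E z)).2

theorem le_dotProduct_add_mulVec {a : ℝ} (h : ∀ i, a ≤ hA.eigenvalues i) (E : Matrix n n ℝ)
    (z : n → ℝ) : (a - ‖E‖) * (z ⬝ᵥ z) ≤ z ⬝ᵥ ((A + E) *ᵥ z) := by
  rw [add_mulVec, dotProduct_add, sub_mul]
  linarith [hA.le_dotProduct_mulVec_of_le_eigenvalues h z,
    (abs_le.mp (abs_dotProduct_mulVec_le_l2_opNorm E z)).1]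

end Matrix.IsHermitian

namespace Matrix.IsHermitian

variable {n : ℕ} {A : Matrix (Fin n) (Fin n) ℝ} (hA : A.IsHermitian) {j : Fin n} {c : ℝ}

theorem nthLargest_eigenvalues_le {W : Submodule ℝ (Fin n → ℝ)}
    (hW : n ≤ Module.finrank ℝ W + j) (h : ∀ x ∈ W, x ⬝ᵥ (A *ᵥ x) ≤ c * (x ⬝ᵥ x)) :
    nthLargest hA.eigenvalues j ≤ c := by
  obtain ⟨x, ⟨hxW, hxS⟩, hx0⟩ := Submodule.exists_mem_inf_ne_zero_of_finrank_lt
    (V := W) (W := hA.eigenvectorSpan {i | nthLargest hA.eigenvalues j ≤ hA.eigenvalues i}) (by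
      rw [Module.finrank_fin_fun, finrank_eigenvectorSpan]
      have := succ_le_card_nthLargest_le hA.eigenvalues j
      omega)
  have hlow := hA.le_dotProduct_mulVec_of_mem_eigenvectorSpan (fun i hi => (mem_filter.1 hi).2) hxS
  exact le_of_mul_le_mul_right (hlow.trans (h x hxW))
    (by simpa using dotProduct_star_self_pos_iff.mpr hx0)

theorem le_nthLargest_eigenvalues {V : Submodule ℝ (Fin n → ℝ)}
    (hV : j + 1 ≤ Module.finrank ℝ V) (h : ∀ x ∈ V, c * (x ⬝ᵥ x) ≤ x ⬝ᵥ (A *ᵥ x)) :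
    c ≤ nthLargest hA.eigenvalues j := by
  obtain ⟨x, ⟨hxV, hxS⟩, hx0⟩ := Submodule.exists_mem_inf_ne_zero_of_finrank_lt
    (V := V) (W := hA.eigenvectorSpan {i | hA.eigenvalues i ≤ nthLargest hA.eigenvalues j}) (by
      rw [Module.finrank_fin_fun, finrank_eigenvectorSpan]
      have := le_card_le_nthLargest_add hA.eigenvalues j
      omega)
  have hup := hA.dotProduct_mulVec_le_of_mem_eigenvectorSpan (fun i hi => (mem_filter.1 hi).2) hxS
  exact le_of_mul_le_mul_right ((h x hxV).trans hup)
    (by simpa using dotProduct_star_self_pos_iff.mpr hx0)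

end Matrix.IsHermitian

section Gram

variable {m ι : Type*} [Fintype m] [Fintype ι] (L : Matrix m ι ℝ)

theorem dotProduct_mul_transpose_mulVec (x : m → ℝ) :
    x ⬝ᵥ ((L * Lᵀ) *ᵥ x) = (Lᵀ *ᵥ x) ⬝ᵥ (Lᵀ *ᵥ x) := by
  rw [← mulVec_mulVec, dotProduct_mulVec, ← mulVec_transpose]

theorem mulVec_dotProduct_mulVec (y : ι → ℝ) :
    (L *ᵥ y) ⬝ᵥ (L *ᵥ y) = y ⬝ᵥ ((Lᵀ * L) *ᵥ y) := by
  rw [← mulVec_mulVec, dotProduct_mulVec y Lᵀ, vecMul_transpose]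

theorem dotProduct_mul_transpose_mulVec_le {c : ℝ} (hc : 0 ≤ c)
    (h : ∀ z, z ⬝ᵥ ((Lᵀ * L) *ᵥ z) ≤ c * (z ⬝ᵥ z)) (x : m → ℝ) :
    x ⬝ᵥ ((L * Lᵀ) *ᵥ x) ≤ c * (x ⬝ᵥ x) := by
  -- With `z = Lᵀ x`: `(z ⬝ z)² = (x ⬝ L z)² ≤ (x ⬝ x) (z ⬝ LᵀL z) ≤ c (x ⬝ x) (z ⬝ z)`.
  obtain ⟨z, hz⟩ : ∃ z, Lᵀ *ᵥ x = z := ⟨_, rfl⟩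
  have hcs := dotProduct_sq_le x (L *ᵥ z)
  rw [dotProduct_mulVec, ← mulVec_transpose, hz, mulVec_dotProduct_mulVec] at hcs
  rw [dotProduct_mul_transpose_mulVec, hz]
  have hq := mul_le_mul_of_nonneg_left (h z) (dotProduct_self_nonneg x)
  nlinarith [mul_nonneg hc (dotProduct_self_nonneg x), dotProduct_self_nonneg z]

theorem le_dotProduct_mul_transpose_mulVec_mulVec {b : ℝ}
    (h : ∀ z, b * (z ⬝ᵥ z) ≤ z ⬝ᵥ ((Lᵀ * L) *ᵥ z)) (y : ι → ℝ) :
    b * ((L *ᵥ y) ⬝ᵥ (L *ᵥ y)) ≤ (L *ᵥ y) ⬝ᵥ ((L * Lᵀ) *ᵥ (L *ᵥ y)) := by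
  -- With `w = LᵀL y`, so that `y ⬝ w = ‖L y‖²`: `b (y ⬝ w)² ≤ b (y ⬝ y) (w ⬝ w) ≤ (y ⬝ w) (w ⬝ w)`.
  obtain ⟨w, hw⟩ : ∃ w, (Lᵀ * L) *ᵥ y = w := ⟨_, rfl⟩
  have hcs := dotProduct_sq_le y w
  have hyw := dotProduct_self_nonneg (L *ᵥ y)
  have hy := h y
  rw [mulVec_dotProduct_mulVec, hw] at hyw
  rw [hw] at hy
  rw [dotProduct_mul_transpose_mulVec, mulVec_mulVec, mulVec_dotProduct_mulVec, hw]
  rcases le_or_gt b 0 with hb | hb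
  · nlinarith [dotProduct_self_nonneg w]
  · have hq := mul_le_mul_of_nonneg_right hy (dotProduct_self_nonneg w)
    have hbcs := mul_le_mul_of_nonneg_left hcs hb.le
    nlinarith [dotProduct_self_nonneg w]

end Gram

section LowRankPlusBounded

variable {N r : ℕ} {L : Matrix (Fin N) (Fin r) ℝ} {S : Matrix (Fin N) (Fin N) ℝ}
  (hM : (L * Lᵀ + S).IsHermitian) {j : Fin N}

theorem nthLargest_eigenvalues_mul_transpose_add_le {C : ℝ}
    (hS : ∀ x, x ⬝ᵥ (S *ᵥ x) ≤ C * (x ⬝ᵥ x)) (hj : r ≤ j) :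
    nthLargest hM.eigenvalues j ≤ C := by
  refine hM.nthLargest_eigenvalues_le (W := LinearMap.ker (mulVecLin Lᵀ)) ?_ fun x hx => ?_
  · have hrange := Submodule.finrank_le (LinearMap.range (mulVecLin Lᵀ))
    have := LinearMap.finrank_range_add_finrank_ker (mulVecLin Lᵀ)
    simp only [Module.finrank_fin_fun] at hrange this
    omega
  · have hx0 : Lᵀ *ᵥ x = 0 := hx
    rw [add_mulVec, dotProduct_add, dotProduct_mul_transpose_mulVec, hx0]
    simpa using hS x

theorem nthLargest_eigenvalues_mul_transpose_add_le_add {c C : ℝ} (hc : 0 ≤ c)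
    (hG : ∀ z, z ⬝ᵥ ((Lᵀ * L) *ᵥ z) ≤ c * (z ⬝ᵥ z))
    (hS : ∀ x, x ⬝ᵥ (S *ᵥ x) ≤ C * (x ⬝ᵥ x)) :
    nthLargest hM.eigenvalues j ≤ c + C := by
  refine hM.nthLargest_eigenvalues_le (W := ⊤) (by simp) fun x _ => ?_
  rw [add_mulVec, dotProduct_add, add_mul]
  exact add_le_add (dotProduct_mul_transpose_mulVec_le L hc hG x) (hS x)

theorem le_nthLargest_eigenvalues_mul_transpose_add {b : ℝ}
    (hG : ∀ z, b * (z ⬝ᵥ z) ≤ z ⬝ᵥ ((Lᵀ * L) *ᵥ z)) (hS : ∀ x, 0 ≤ x ⬝ᵥ (S *ᵥ x))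
    (hj : j < r) : b ≤ nthLargest hM.eigenvalues j := by
  have hquad : ∀ x, x ⬝ᵥ ((L * Lᵀ + S) *ᵥ x) = (Lᵀ *ᵥ x) ⬝ᵥ (Lᵀ *ᵥ x) + x ⬝ᵥ (S *ᵥ x) :=
    fun x => by rw [add_mulVec, dotProduct_add, dotProduct_mul_transpose_mulVec]
  rcases le_or_gt b 0 with hb | hb
  · refine hM.le_nthLargest_eigenvalues (V := ⊤) (by simp) fun x _ => ?_
    rw [hquad]
    nlinarith [dotProduct_self_nonneg x, dotProduct_self_nonneg (Lᵀ *ᵥ x), hS x]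
  -- `b > 0` makes `L` injective, so its range has dimension `r > j`.
  have hinj : Function.Injective (mulVecLin L) := by
    refine (injective_iff_map_eq_zero _).mpr fun y hy => ?_
    have hLy : L *ᵥ y = 0 := hy
    have := hG y
    rw [← mulVec_dotProduct_mulVec, hLy, zero_dotProduct] at this
    exact dotProduct_self_eq_zero.mp
      (le_antisymm (nonpos_of_mul_nonpos_right this hb) (dotProduct_self_nonneg y))
  refine hM.le_nthLargest_eigenvalues (V := LinearMap.range (mulVecLin L)) ?_ ?_
  · rw [LinearMap.finrank_range_of_inj hinj, Module.finrank_fin_fun]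
    exact hj
  · rintro _ ⟨y, rfl⟩
    rw [add_mulVec, dotProduct_add]
    have := le_dotProduct_mul_transpose_mulVec_mulVec L hG y
    have := hS (L *ᵥ y)
    simp only [mulVecLin_apply]
    linarith

end LowRankPlusBounded

theorem spiked_eigenvalue_structure_general
    (r : ℕ) (C₁ C₂ : ℝ) (hC₂ : 0 < C₂) (hC : C₂ ≤ C₁)
    (Λ : (N : ℕ) → Matrix (Fin N) (Fin r) ℝ)
    (Su : (N : ℕ) → Matrix (Fin N) (Fin N) ℝ)
    (hu : ∀ N, (Su N).IsHermitian)
    (huEig : ∀ N (i : Fin N), C₂ ≤ (hu N).eigenvalues i ∧ (hu N).eigenvalues i ≤ C₁)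
    (SL : Matrix (Fin r) (Fin r) ℝ) (hSLh : SL.IsHermitian)
    (hSLeig : ∀ i : Fin r, C₂ ≤ hSLh.eigenvalues i ∧ hSLh.eigenvalues i ≤ C₁)
    (hconv : Tendsto (fun N : ℕ => ‖(N : ℝ)⁻¹ • ((Λ N)ᵀ * Λ N) - SL‖) atTop (nhds 0))
    (hy : ∀ N, (Λ N * (Λ N)ᵀ + Su N).IsHermitian) :
    ∃ C₁' C₂' : ℝ, 0 < C₂' ∧ 0 < C₁' ∧
      ∃ ε₁ ε₂ : ℕ → ℝ, Tendsto ε₁ atTop (nhds 0) ∧ Tendsto ε₂ atTop (nhds 0) ∧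
        ∀ N (j : Fin N),
          ((j : ℕ) < r →
            (N : ℝ) * (C₂' + ε₁ N) ≤ nthLargest ((hy N).eigenvalues) j ∧
            nthLargest ((hy N).eigenvalues) j ≤ (N : ℝ) * (C₁' + ε₂ N)) ∧
          (r ≤ (j : ℕ) → nthLargest ((hy N).eigenvalues) j ≤ C₁) := by
  set E : ℕ → Matrix (Fin r) (Fin r) ℝ := fun N => (N : ℝ)⁻¹ • ((Λ N)ᵀ * Λ N) - SL
  have hgram : ∀ N : ℕ, (N : ℝ) ≠ 0 →
      ∀ z, z ⬝ᵥ (((Λ N)ᵀ * Λ N) *ᵥ z) = N * (z ⬝ᵥ ((SL + E N) *ᵥ z)) := fun N hN z => by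
    rw [add_sub_cancel, smul_mulVec, dotProduct_smul, smul_eq_mul, ← mul_assoc,
      mul_inv_cancel₀ hN, one_mul]
  refine ⟨C₁, C₂, hC₂, hC₂.trans_le hC, fun N => -‖E N‖, fun N => ‖E N‖ + C₁ / N,
    by simpa using hconv.neg, by simpa using hconv.add (tendsto_const_div_atTop_nhds_zero_nat C₁),
    fun N j => ?_⟩
  have hN : (N : ℝ) ≠ 0 := Nat.cast_ne_zero.mpr j.pos.ne'
  have hSu : ∀ x, x ⬝ᵥ (Su N *ᵥ x) ≤ C₁ * (x ⬝ᵥ x) :=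
    (hu N).dotProduct_mulVec_le_of_eigenvalues_le fun i => (huEig N i).2
  refine ⟨fun hj => ⟨?_, ?_⟩, fun hj => nthLargest_eigenvalues_mul_transpose_add_le (hy N) hSu hj⟩
  · refine le_nthLargest_eigenvalues_mul_transpose_add (hy N) (fun z => ?_) (fun x => ?_) hj
    · rw [hgram N hN, mul_assoc, ← sub_eq_add_neg]
      gcongr
      exact hSLh.le_dotProduct_add_mulVec (fun i => (hSLeig i).1) _ z
    · exact (mul_nonneg hC₂.le (dotProduct_self_nonneg x)).trans
        ((hu N).le_dotProduct_mulVec_of_le_eigenvalues (fun i => (huEig N i).1) x)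
  · calc nthLargest (hy N).eigenvalues j ≤ N * (C₁ + ‖E N‖) + C₁ := by
          refine nthLargest_eigenvalues_mul_transpose_add_le_add (hy N)
            (mul_nonneg (Nat.cast_nonneg N) (by linarith [norm_nonneg (E N)]))
            (fun z => ?_) hSu
          rw [hgram N hN, mul_assoc]
          gcongr
          exact hSLh.dotProduct_add_mulVec_le (fun i => (hSLeig i).2) _ z
      _ = N * (C₁ + (‖E N‖ + C₁ / N)) := by field_simp; ring

theorem spiked_eigenvalue_structure
    (r : ℕ) (C₁ C₂ : ℝ) (hC₂ : 0 < C₂) (hC : C₂ ≤ C₁)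
    (Λ : (N : ℕ) → Matrix (Fin N) (Fin r) ℝ)
    (Su : (N : ℕ) → Matrix (Fin N) (Fin N) ℝ)
    (hu : ∀ N, (Su N).IsHermitian)
    (huEig : ∀ N (i : Fin N), C₂ ≤ (hu N).eigenvalues i ∧ (hu N).eigenvalues i ≤ C₁)
    (SL : Matrix (Fin r) (Fin r) ℝ) (hSL : SL.PosDef) (hSLh : SL.IsHermitian)
    (hSLeig : ∀ i : Fin r, C₂ ≤ hSLh.eigenvalues i ∧ hSLh.eigenvalues i ≤ C₁)
    (hconv : Tendsto (fun N : ℕ => ‖(N : ℝ)⁻¹ • ((Λ N)ᵀ * Λ N) - SL‖) atTop (nhds 0))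
    (hy : ∀ N, (Λ N * (Λ N)ᵀ + Su N).IsHermitian) :
    ∃ C₁' C₂' : ℝ, 0 < C₂' ∧ 0 < C₁' ∧
      ∃ ε₁ ε₂ : ℕ → ℝ, Tendsto ε₁ atTop (nhds 0) ∧ Tendsto ε₂ atTop (nhds 0) ∧
        ∀ N (j : Fin N),
          ((j : ℕ) < r →
            (N : ℝ) * (C₂' + ε₁ N) ≤ nthLargest ((hy N).eigenvalues) j ∧
            nthLargest ((hy N).eigenvalues) j ≤ (N : ℝ) * (C₁' + ε₂ N)) ∧
          (r ≤ (j : ℕ) → nthLargest ((hy N).eigenvalues) j ≤ C₁) :=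
  spiked_eigenvalue_structure_general r C₁ C₂ hC₂ hC Λ Su hu huEig SL hSLh hSLeig hconv hy
end

section
/- Let λ̂₁ ≥ ⋯ ≥ λ̂_m > 0 and V_j = Σ_{i=j+1}^m λ̂_i for j = 0,…,m−1. Then for every 1 ≤ j ≤ m−2, ln(1 + λ̂_j/V_{j−1}) / ln(1 + λ̂_{j+1}/V_j) ≤ λ̂_j / λ̂_{j+1}. -/
/-!
Write `a = λ̂_j`, `b = λ̂_{j+1}` and `W = V_j`, so that `V_{j-1} = a + W`. The bounds
`log (1 + x) ≤ x` and `x / (1 + x) ≤ log (1 + x)` give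
`log (1 + a / (a + W)) ≤ a / (a + W) ≤ a / (b + W) = (a / b) · (b / W) / (1 + b / W)`
`≤ (a / b) · log (1 + b / W)`,
where the second step uses `b ≤ a`.
-/

open Real Finset

namespace Real

lemma log_one_add_le_self {x : ℝ} (hx : -1 < x) : log (1 + x) ≤ x := by
  linarith [log_le_sub_one_of_pos (show 0 < 1 + x by linarith)]

lemma div_one_add_le_log_one_add {x : ℝ} (hx : -1 < x) : x / (1 + x) ≤ log (1 + x) := by
  have hpos : 0 < 1 + x := by linarith
  calc x / (1 + x) = 1 - (1 + x)⁻¹ := by field_simp; ring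
    _ ≤ log (1 + x) := one_sub_inv_le_log_of_pos hpos

lemma log_one_add_div_add_le_div_mul_log_one_add_div {a b W : ℝ} (hb : 0 < b) (hba : b ≤ a)
    (hW : 0 < W) : log (1 + a / (a + W)) ≤ a / b * log (1 + b / W) := by
  have ha : 0 < a := hb.trans_le hba
  calc log (1 + a / (a + W))
      ≤ a / (a + W) := log_one_add_le_self (by linarith [div_pos ha (add_pos ha hW)])
    _ ≤ a / (b + W) := by gcongr
    _ = a / b * (b / W / (1 + b / W)) := by field_simp; ring
    _ ≤ a / b * log (1 + b / W) := by
        gcongr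
        exact div_one_add_le_log_one_add (by linarith [div_pos hb hW])

lemma log_one_add_div_add_div_log_one_add_div_le {a b W : ℝ} (hb : 0 < b) (hba : b ≤ a)
    (hW : 0 < W) : log (1 + a / (a + W)) / log (1 + b / W) ≤ a / b := by
  have hlog : 0 < log (1 + b / W) := log_pos (by linarith [div_pos hb hW])
  rw [div_le_iff₀ hlog]
  exact log_one_add_div_add_le_div_mul_log_one_add_div hb hba hW

end Real

theorem tcr_ratio_upper_bound
    (m : ℕ) (lam : ℕ → ℝ)
    (hanti : ∀ i j, 1 ≤ i → i ≤ j → j ≤ m → lam j ≤ lam i)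
    (hpos : ∀ j, 1 ≤ j → j ≤ m → 0 < lam j)
    (V : ℕ → ℝ) (hV : ∀ j, V j = ∑ i ∈ Finset.Icc (j + 1) m, lam i)
    (j : ℕ) (hj : 1 ≤ j) (hjm : j ≤ m - 2) :
    Real.log (1 + lam j / V (j - 1)) / Real.log (1 + lam (j + 1) / V j)
      ≤ lam j / lam (j + 1) := by
  have hVj : 0 < V j := by
    rw [hV]
    refine sum_pos (fun i hi ↦ ?_) (nonempty_Icc.2 (by omega))
    exact hpos i (by grind) (mem_Icc.1 hi).2
  have hsplit : V (j - 1) = lam j + V j := by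
    rw [hV, hV, Nat.sub_add_cancel hj, ← insert_Icc_add_one_left_eq_Icc (by omega),
      sum_insert (by simp)]
  rw [hsplit]
  exact log_one_add_div_add_div_log_one_add_div_le (hpos _ (by omega) (by omega))
    (hanti j (j + 1) hj (by omega) (by omega)) hVj
end

section
/- Let λ̂₁ ≥ ⋯ ≥ λ̂_m > 0 and V_j = Σ_{i=j+1}^m λ̂_i. Then for every 1 ≤ j ≤ m−2, ln(1 + λ̂_j/V_{j−1}) / ln(1 + λ̂_{j+1}/V_j) ≥ (λ̂_j/λ̂_{j+1}) · V_j/(V_{j−1} + λ̂_j). -/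
/-!
With `a = λ̂ⱼ`, `v = V (j - 1)`, `b = λ̂ⱼ₊₁`, `w = Vⱼ`, all positive, the left side is
`(a / (v + a)) / (b / w)`. Bound the numerator below by `c / (1 + c) ≤ log (1 + c)` at `c = a / v`
and the denominator above by `log (1 + c) ≤ c` at `c = b / w`.
-/

open Real Finset

namespace Real

lemma div_add_le_log_one_add_div {a v : ℝ} (ha : 0 ≤ a) (hv : 0 < v) :
    a / (v + a) ≤ log (1 + a / v) := by
  have hpos : 0 < 1 + a / v := by positivity
  calc a / (v + a) = 1 - (1 + a / v)⁻¹ := by field_simp; ring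
    _ ≤ log (1 + a / v) := one_sub_inv_le_log_of_pos hpos

lemma log_one_add_le_self_s17 {c : ℝ} (hc : -1 < c) : log (1 + c) ≤ c := by
  linarith [log_le_sub_one_of_pos (show 0 < 1 + c by linarith)]

lemma div_mul_div_add_le_log_div_log {a v b w : ℝ} (ha : 0 < a) (hv : 0 < v) (hb : 0 < b)
    (hw : 0 < w) :
    (a / b) * (w / (v + a)) ≤ log (1 + a / v) / log (1 + b / w) := by
  have hbw : 0 < b / w := div_pos hb hw
  calc (a / b) * (w / (v + a)) = (a / (v + a)) / (b / w) := by field_simp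
    _ ≤ log (1 + a / v) / log (1 + b / w) :=
      div_le_div₀ (log_nonneg (by linarith [div_pos ha hv]))
        (div_add_le_log_one_add_div ha.le hv) (log_pos (by linarith))
        (log_one_add_le_self_s17 (by linarith))

end Real

lemma sum_Icc_succ_pos {lam : ℕ → ℝ} {k m : ℕ} (hpos : ∀ j, 1 ≤ j → j ≤ m → 0 < lam j)
    (hkm : k + 1 ≤ m) : 0 < ∑ i ∈ Icc (k + 1) m, lam i :=
  sum_pos (fun i hi => hpos i (by grind) (mem_Icc.mp hi).2)
    ⟨k + 1, mem_Icc.mpr ⟨le_rfl, hkm⟩⟩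

theorem tcr_ratio_lower_bound_general
    (m : ℕ) (lam : ℕ → ℝ)
    (hpos : ∀ j, 1 ≤ j → j ≤ m → 0 < lam j)
    (V : ℕ → ℝ) (hV : ∀ j, V j = ∑ i ∈ Finset.Icc (j + 1) m, lam i)
    (j : ℕ) (hj : 1 ≤ j) (hjm : j ≤ m - 2) :
    (lam j / lam (j + 1)) * (V j / (V (j - 1) + lam j))
      ≤ Real.log (1 + lam j / V (j - 1)) / Real.log (1 + lam (j + 1) / V j) := by
  have hVprev : 0 < V (j - 1) := hV (j - 1) ▸ sum_Icc_succ_pos hpos (by omega)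
  have hVj : 0 < V j := hV j ▸ sum_Icc_succ_pos hpos (by omega)
  exact div_mul_div_add_le_log_div_log (hpos j hj (by omega)) hVprev
    (hpos (j + 1) (by omega) (by omega)) hVj

theorem tcr_ratio_lower_bound
    (m : ℕ) (lam : ℕ → ℝ)
    (hanti : ∀ i j, 1 ≤ i → i ≤ j → j ≤ m → lam j ≤ lam i)
    (hpos : ∀ j, 1 ≤ j → j ≤ m → 0 < lam j)
    (V : ℕ → ℝ) (hV : ∀ j, V j = ∑ i ∈ Finset.Icc (j + 1) m, lam i)
    (j : ℕ) (hj : 1 ≤ j) (hjm : j ≤ m - 2) :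
    (lam j / lam (j + 1)) * (V j / (V (j - 1) + lam j))
      ≤ Real.log (1 + lam j / V (j - 1)) / Real.log (1 + lam (j + 1) / V j) :=
  tcr_ratio_lower_bound_general m lam hpos V hV j hj hjm
end
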